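/- For the nearest-neighbor ring (k = 1), every twisted state with cos(2πq/N) < 0 (i.e., N/4 < |q mod N| < 3N/4) is linearly unstable: λ_{m,q} = 2cos(2πq/N)[cos(2πm/N) − 1] > 0 for every m ∈ {1,…,N−1}. -/

import Mathlib

/-! The discrete Fourier transform of the nearest-neighbour kernel is `Ĥ(p) = 2 cos (2πp/N)`, so the
addition formula for cosine gives `λ_{m,q} = 2 cos (2πq/N) (cos (2πm/N) - 1)`. For `0 < m < N` the
second factor is negative, so `λ_{m,q}` is a product of two negative numbers. -/

noncomputable def dftR (N : ℕ) (h : Fin N → ℝ) (m : ℤ) : ℂ :=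
  ∑ k : Fin N, (h k : ℂ) * Complex.exp (-2 * Real.pi * Complex.I * m * (k : ℕ) / N)

open Real Complex

lemma exp_neg_two_pi_I_mul_sub_div {N k : ℕ} (hk : k ≤ N) (p : ℤ) :
    exp (-2 * π * I * p * ((N - k : ℕ) : ℂ) / N) = exp (2 * π * I * p * k / N) := by
  rcases N.eq_zero_or_pos with rfl | hNpos
  · simp
  have hN : (N : ℂ) ≠ 0 := by exact_mod_cast hNpos.ne'
  have hperiod : -2 * π * I * p * ((N - k : ℕ) : ℂ) / N =
      (-p : ℤ) * (2 * π * I) + 2 * π * I * p * k / N := by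
    push_cast [Nat.cast_sub hk]
    field_simp
    ring
  rw [hperiod, Complex.exp_add, exp_int_mul_two_pi_mul_I, one_mul]

lemma dftR_eq_two_mul_cos {N : ℕ} (hN : 3 ≤ N) {h : Fin N → ℝ}
    (hh : ∀ j : Fin N, h j = if (j : ℕ) = 1 ∨ (j : ℕ) = N - 1 then 1 else 0) (p : ℤ) :
    dftR N h p = ((2 * Real.cos (2 * π * p / N) : ℝ) : ℂ) := by
  have hne : (⟨1, by omega⟩ : Fin N) ≠ ⟨N - 1, by omega⟩ := by simp only [ne_eq, Fin.mk.injEq]; omega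
  rw [dftR, Fintype.sum_eq_add _ _ hne, hh, hh, if_pos (Or.inl rfl), if_pos (Or.inr rfl)]
  · simp only [ofReal_one, one_mul]
    rw [exp_neg_two_pi_I_mul_sub_div (by omega : 1 ≤ N)]
    push_cast
    rw [two_cos]
    ring_nf
  · rintro j ⟨hj1, hj2⟩
    rw [hh, if_neg (by rintro (h | h) <;> simp_all [Fin.ext_iff]), ofReal_zero, zero_mul]

lemma cos_add_add_cos_sub_div_two_sub (x y : ℝ) :
    (2 * Real.cos (x + y) + 2 * Real.cos (x - y)) / 2 - 2 * Real.cos x =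
      2 * Real.cos x * (Real.cos y - 1) := by
  rw [Real.cos_add, Real.cos_sub]; ring

lemma cos_two_pi_mul_lt_one {x : ℝ} (h0 : 0 < x) (h1 : x < 1) : Real.cos (2 * π * x) < 1 := by
  refine (Real.cos_le_one _).lt_of_ne fun h => ?_
  rw [Real.cos_eq_one_iff_of_lt_of_lt (by nlinarith [pi_pos]) (by nlinarith [pi_pos])] at h
  nlinarith [pi_pos]

/-- Nearest-neighbor ring: twisted states with cos(2πq/N) < 0 are linearly unstable in
every direction m ∈ {1,…,N−1}. -/
theorem stmt_15 (N : ℕ) (hN : 3 ≤ N) (h : Fin N → ℝ)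
    (hh : ∀ j : Fin N, h j = if (j : ℕ) = 1 ∨ (j : ℕ) = N - 1 then 1 else 0)
    (q : ℤ) (hq : Real.cos (2 * Real.pi * q / N) < 0) :
    ∀ m : ℤ, 1 ≤ m → m ≤ (N : ℤ) - 1 →
      0 < ((dftR N h (q + m) + dftR N h (q - m)) / 2 - dftR N h q).re := by
  intro m hm1 hm2
  have hN0 : (0 : ℝ) < N := by positivity
  have hm : Real.cos (2 * π * (m / N)) < 1 := by
    have : (m : ℝ) < N := by exact_mod_cast (by omega : m < N)
    exact cos_two_pi_mul_lt_one (by positivity) ((div_lt_one hN0).2 this)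
  have hadd : 2 * π * ((q + m : ℤ) : ℝ) / N = 2 * π * q / N + 2 * π * (m / N) := by push_cast; ring
  have hsub : 2 * π * ((q - m : ℤ) : ℝ) / N = 2 * π * q / N - 2 * π * (m / N) := by push_cast; ring
  simp only [dftR_eq_two_mul_cos hN hh, hadd, hsub, sub_re, add_re, div_ofNat_re, ofReal_re,
    cos_add_add_cos_sub_div_two_sub]
  exact mul_pos_of_neg_of_neg (by linarith) (by linarith)
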